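/- Every time-deterministic guarded closed process P of the basic calculus provably satisfies a time-deterministic, prioritized, standard, guarded and closed equation set. -/

import Mathlib

namespace DTCalc

inductive Act where
  | tau : Act
  | vis : ℕ → Act
  | delta : Act
deriving DecidableEq

/-- `γ` is (the visible action of) a member of `S`. -/
def Act.inSet (γ : Act) (S : Set ℕ) : Prop :=
  ∃ a, γ = Act.vis a ∧ a ∈ S

inductive Expr where
  | nil : Expr
  | one : Expr                      -- the terminated process 𝟙
  | var : ℕ → Expr
  | pre : Act → Expr → Expr         -- basic prefix γ.E
  | tpre : Act → Expr → Expr        -- timed prefix γᵗ.E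
  | sum : Expr → Expr → Expr        -- basic choice E + F
  | tcho : Expr → Expr → Expr       -- timed choice E +ᵗ F
  | recur : ℕ → Expr → Expr         -- rec X.E
  | pri : Expr → Expr               -- priority scope
  | vis : Expr → Expr               -- auxiliary vis(E)
  | hide : Set ℕ → Expr → Expr      -- hiding E / L
  | par : Set ℕ → Expr → Expr → Expr      -- CSP parallel E ∥_S F
  | lmerge : Set ℕ → Expr → Expr → Expr   -- left merge
  | smerge : Set ℕ → Expr → Expr → Expr   -- synchronization merge

def subst : Expr → ℕ → Expr → Expr
  | .nil, _, _ => .nil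
  | .one, _, _ => .one
  | .var m, x, F => if m = x then F else .var m
  | .pre γ E, x, F => .pre γ (subst E x F)
  | .tpre γ E, x, F => .tpre γ (subst E x F)
  | .sum E G, x, F => .sum (subst E x F) (subst G x F)
  | .tcho E G, x, F => .tcho (subst E x F) (subst G x F)
  | .recur y E, x, F => if y = x then .recur y E else .recur y (subst E x F)
  | .pri E, x, F => .pri (subst E x F)
  | .vis E, x, F => .vis (subst E x F)
  | .hide L E, x, F => .hide L (subst E x F)
  | .par S E G, x, F => .par S (subst E x F) (subst G x F)
  | .lmerge S E G, x, F => .lmerge S (subst E x F) (subst G x F)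
  | .smerge S E G, x, F => .smerge S (subst E x F) (subst G x F)

def free : Expr → ℕ → Prop
  | .nil, _ => False
  | .one, _ => False
  | .var m, x => m = x
  | .pre _ E, x => free E x
  | .tpre _ E, x => free E x
  | .sum E G, x => free E x ∨ free G x
  | .tcho E G, x => free E x ∨ free G x
  | .recur y E, x => x ≠ y ∧ free E x
  | .pri E, x => free E x
  | .vis E, x => free E x
  | .hide _ E, x => free E x
  | .par _ E G, x => free E x ∨ free G x
  | .lmerge _ E G, x => free E x ∨ free G x
  | .smerge _ E G, x => free E x ∨ free G x

def Closed (E : Expr) : Prop := ∀ x, ¬ free E x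

/-- Standard (non-δ) transitions; these never depend on δ-transitions. -/
inductive StepStd : Expr → Act → Expr → Prop where
  | pre {α : Act} (h : α ≠ Act.delta) (E : Expr) : StepStd (.pre α E) α E
  | tpre {α : Act} (h : α ≠ Act.delta) (E : Expr) : StepStd (.tpre α E) α E
  | sumL {P α P'} (Q : Expr) : StepStd P α P' → StepStd (.sum P Q) α P'
  | sumR {Q α Q'} (P : Expr) : StepStd Q α Q' → StepStd (.sum P Q) α Q'
  | tchoL {P α P'} (Q : Expr) : StepStd P α P' → StepStd (.tcho P Q) α P'
  | tchoR {Q α Q'} (P : Expr) : StepStd Q α Q' → StepStd (.tcho P Q) α Q'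
  | unf {x E γ P'} : StepStd (subst E x (.recur x E)) γ P' → StepStd (.recur x E) γ P'
  | pri {P α P'} : StepStd P α P' → StepStd (.pri P) α P'
  | parL {S P α P'} (Q : Expr) (h : ¬ Act.inSet α S) :
      StepStd P α P' → StepStd (.par S P Q) α (.par S P' Q)
  | parR {S Q α Q'} (P : Expr) (h : ¬ Act.inSet α S) :
      StepStd Q α Q' → StepStd (.par S P Q) α (.par S P Q')
  | parS {S P Q a P' Q'} (h : a ∈ S) :
      StepStd P (.vis a) P' → StepStd Q (.vis a) Q' →
      StepStd (.par S P Q) (.vis a) (.par S P' Q')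
  | hideIn {L P a P'} (h : a ∈ L) :
      StepStd P (.vis a) P' → StepStd (.hide L P) Act.tau (.hide L P')
  | hideOut {L P α P'} (h : ¬ Act.inSet α L) :
      StepStd P α P' → StepStd (.hide L P) α (.hide L P')
  | visA {P a P'} : StepStd P (.vis a) P' → StepStd (.vis P) (.vis a) P'
  | visT {P P'' a P'} : StepStd P Act.tau P'' → StepStd (.vis P'') (.vis a) P' →
      StepStd (.vis P) (.vis a) P'
  | lm {S P α P'} (Q : Expr) (h : ¬ Act.inSet α S) :
      StepStd P α P' → StepStd (.lmerge S P Q) α (.par S P' Q)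
  | sm {S P Q a P' Q'} (h : a ∈ S) :
      StepStd (.vis P) (.vis a) P' → StepStd (.vis Q) (.vis a) Q' →
      StepStd (.smerge S P Q) (.vis a) (.par S P' Q')

def CanTau (P : Expr) : Prop := ∃ P', StepStd P Act.tau P'

/-- δ ("tick") transitions (stratified: negative premises refer to standard
transitions only). -/
inductive StepDel : Expr → Expr → Prop where
  | one : StepDel .one .one
  | pre (E : Expr) : StepDel (.pre Act.delta E) E
  | tpreD (E : Expr) : StepDel (.tpre Act.delta E) E
  | tpreV (a : ℕ) (E : Expr) : StepDel (.tpre (Act.vis a) E) (.tpre (Act.vis a) E)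
  | sumL {P P'} (Q : Expr) : StepDel P P' → ¬ CanTau Q → StepDel (.sum P Q) P'
  | sumR {Q Q'} (P : Expr) : StepDel Q Q' → ¬ CanTau P → StepDel (.sum P Q) Q'
  | tcho {P P' Q Q'} : StepDel P P' → StepDel Q Q' → StepDel (.tcho P Q) (.tcho P' Q')
  | par {S : Set ℕ} {P P' Q Q'} : StepDel P P' → StepDel Q Q' →
      StepDel (.par S P Q) (.par S P' Q')
  | hide {L : Set ℕ} {P P'} (h : ∀ a ∈ L, ¬ ∃ P'', StepStd P (Act.vis a) P'') :
      StepDel P P' → StepDel (.hide L P) (.hide L P')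
  | unf {x E P'} : StepDel (subst E x (.recur x E)) P' → StepDel (.recur x E) P'
  | sm {S : Set ℕ} {P P' Q Q'} : StepDel P P' → StepDel Q Q' →
      StepDel (.smerge S P Q) (.par S P' Q')

/-- The full transition relation. -/
def Step (P : Expr) (γ : Act) (Q : Expr) : Prop :=
  if γ = Act.delta then StepDel P Q else StepStd P γ Q

def TauStar : Expr → Expr → Prop :=
  Relation.ReflTransGen (fun P Q => Step P Act.tau Q)

def Weak (P : Expr) (γ : Act) (Q : Expr) : Prop :=
  ∃ P₁ P₂, TauStar P P₁ ∧ Step P₁ γ P₂ ∧ TauStar P₂ Q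

def WeakHat (P : Expr) (γ : Act) (Q : Expr) : Prop :=
  if γ = Act.tau then TauStar P Q else Weak P γ Q

def IsWeakBisim (β : Expr → Expr → Prop) : Prop :=
  ∀ P Q, β P Q →
    (∀ γ P', Step P γ P' → ∃ Q', WeakHat Q γ Q' ∧ β P' Q') ∧
    (∀ γ Q', Step Q γ Q' → ∃ P', WeakHat P γ P' ∧ β P' Q')

/-- Weak bisimilarity `≈`. -/
def WBisim (P Q : Expr) : Prop := ∃ β, IsWeakBisim β ∧ β P Q

/-- Rooted time weak bisimulations. -/
def IsRTWB (β : Expr → Expr → Prop) : Prop :=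
  ∀ P Q, β P Q →
    (∀ α P', α ≠ Act.delta → Step P α P' → ∃ Q', Weak Q α Q' ∧ WBisim P' Q') ∧
    (∀ P', Step P Act.delta P' → ∃ Q', Step Q Act.delta Q' ∧ β P' Q') ∧
    (∀ α Q', α ≠ Act.delta → Step Q α Q' → ∃ P', Weak P α P' ∧ WBisim P' Q') ∧
    (∀ Q', Step Q Act.delta Q' → ∃ P', Step P Act.delta P' ∧ β P' Q')

/-- Time observational congruence `≃_T`. -/
def TObsCong (P Q : Expr) : Prop := ∃ β, IsRTWB β ∧ β P Q

def Reach : Expr → Expr → Prop :=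
  Relation.ReflTransGen (fun P Q => ∃ γ, Step P γ Q)

/-- Every reachable state has at most one outgoing δ transition. -/
def TimeDet (P : Expr) : Prop :=
  ∀ Q, Reach P Q → ∀ Q₁ Q₂, Step Q Act.delta Q₁ → Step Q Act.delta Q₂ → Q₁ = Q₂

/-- Terms of the basic calculus extended with the static operators ∥_S and /L. -/
def InStatic : Expr → Prop
  | .nil => True
  | .var _ => True
  | .pre _ E => InStatic E
  | .sum E F => InStatic E ∧ InStatic F
  | .recur _ E => InStatic E
  | .par _ E F => InStatic E ∧ InStatic F
  | .hide _ E => InStatic E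
  | _ => False

/-- Terms of the (specification level) discrete time calculus. -/
def InDT : Expr → Prop
  | .nil => True
  | .one => True
  | .var _ => True
  | .tpre _ E => InDT E
  | .tcho E F => InDT E ∧ InDT F
  | .par _ E F => InDT E ∧ InDT F
  | .hide _ E => InDT E
  | .recur _ E => InDT E
  | _ => False

/-- Terms of the basic calculus. -/
def Basic : Expr → Prop
  | .nil => True
  | .var _ => True
  | .pre _ E => Basic E
  | .sum E F => Basic E ∧ Basic F
  | .recur _ E => Basic E
  | _ => False

/-- Some free occurrence of `x` is fully unguarded (not under any prefix). -/
def FUVar : Expr → ℕ → Prop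
  | .var m, x => m = x
  | .sum E F, x => FUVar E x ∨ FUVar F x
  | .tcho E F, x => FUVar E x ∨ FUVar F x
  | .par _ E F, x => FUVar E x ∨ FUVar F x
  | .lmerge _ E F, x => FUVar E x ∨ FUVar F x
  | .smerge _ E F, x => FUVar E x ∨ FUVar F x
  | .hide _ E, x => FUVar E x
  | .pri E, x => FUVar E x
  | .vis E, x => FUVar E x
  | .recur y E, x => y ≠ x ∧ FUVar E x
  | _, _ => False

/-- Every free occurrence of `x` in `E` is (strongly) guarded. -/
def GVar : Expr → ℕ → Prop
  | .nil, _ => True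
  | .one, _ => True
  | .var m, x => m ≠ x
  | .pre γ E, x => γ = Act.tau → GVar E x
  | .tpre γ E, x => γ = Act.tau → GVar E x
  | .sum E F, x => GVar E x ∧ GVar F x
  | .tcho E F, x => GVar E x ∧ GVar F x
  | .recur y E, x => y ≠ x → GVar E x
  | .pri E, x => GVar E x
  | .vis E, x => GVar E x
  | .hide _ E, x => GVar E x
  | .par _ E F, x => GVar E x ∧ GVar F x
  | .lmerge _ E F, x => GVar E x ∧ GVar F x
  | .smerge _ E F, x => GVar E x ∧ GVar F x

def Guarded : Expr → Prop
  | .nil => True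
  | .one => True
  | .var _ => True
  | .pre _ E => Guarded E
  | .tpre _ E => Guarded E
  | .sum E F => Guarded E ∧ Guarded F
  | .tcho E F => Guarded E ∧ Guarded F
  | .recur y E => GVar E y ∧ Guarded E
  | .pri E => Guarded E
  | .vis E => Guarded E
  | .hide _ E => Guarded E
  | .par _ E F => Guarded E ∧ Guarded F
  | .lmerge _ E F => Guarded E ∧ Guarded F
  | .smerge _ E F => Guarded E ∧ Guarded F

/-- `x` is serial in `E` : every subexpression containing `x` free, apart from
`x` itself, is of the form γ.F, F + G or rec Y.F. -/
def SerialVar : Expr → ℕ → Prop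
  | .nil, _ => True
  | .one, _ => True
  | .var _, _ => True
  | .pre _ E, x => SerialVar E x
  | .sum E F, x => SerialVar E x ∧ SerialVar F x
  | .recur y E, x => y = x ∨ SerialVar E x
  | .pri E, x => ¬ free E x
  | .vis E, x => ¬ free E x
  | .tpre _ E, x => ¬ free E x
  | .hide _ E, x => ¬ free E x
  | .tcho E F, x => ¬ free E x ∧ ¬ free F x
  | .par _ E F, x => ¬ free E x ∧ ¬ free F x
  | .lmerge _ E F, x => ¬ free E x ∧ ¬ free F x
  | .smerge _ E F, x => ¬ free E x ∧ ¬ free F x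

/-- Simultaneous substitution of closed terms for free variables. -/
def msubst : Expr → (ℕ → Expr) → Expr
  | .nil, _ => .nil
  | .one, _ => .one
  | .var m, σ => σ m
  | .pre γ E, σ => .pre γ (msubst E σ)
  | .tpre γ E, σ => .tpre γ (msubst E σ)
  | .sum E F, σ => .sum (msubst E σ) (msubst F σ)
  | .tcho E F, σ => .tcho (msubst E σ) (msubst F σ)
  | .recur y E, σ => .recur y (msubst E (Function.update σ y (.var y)))
  | .pri E, σ => .pri (msubst E σ)
  | .vis E, σ => .vis (msubst E σ)
  | .hide L E, σ => .hide L (msubst E σ)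
  | .par S E F, σ => .par S (msubst E σ) (msubst F σ)
  | .lmerge S E F, σ => .lmerge S (msubst E σ) (msubst F σ)
  | .smerge S E F, σ => .smerge S (msubst E σ) (msubst F σ)

/-- Time observational congruence on open terms (via closed substitutions). -/
def TObsCongO (E F : Expr) : Prop :=
  ∀ σ : ℕ → Expr, (∀ n, Closed (σ n)) → TObsCong (msubst E σ) (msubst F σ)

/-- The axiom system 𝒜_DT. -/
inductive ProvDT : Expr → Expr → Prop where
  | refl (E) : ProvDT E E
  | symm {E F} : ProvDT E F → ProvDT F E
  | trans {E F G} : ProvDT E F → ProvDT F G → ProvDT E G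
  | congPre (γ) {E F} : ProvDT E F → ProvDT (.pre γ E) (.pre γ F)
  | congTPre (γ) {E F} : ProvDT E F → ProvDT (.tpre γ E) (.tpre γ F)
  | congSum {E E' F F'} : ProvDT E E' → ProvDT F F' → ProvDT (.sum E F) (.sum E' F')
  | congTCho {E E' F F'} : ProvDT E E' → ProvDT F F' → ProvDT (.tcho E F) (.tcho E' F')
  | congRec (x) {E F} : ProvDT E F → ProvDT (.recur x E) (.recur x F)
  | congPri {E F} : ProvDT E F → ProvDT (.pri E) (.pri F)
  | congVis {E F} : ProvDT E F → ProvDT (.vis E) (.vis F)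
  | congHide (L) {E F} : ProvDT E F → ProvDT (.hide L E) (.hide L F)
  | congPar (S) {E E' F F'} : ProvDT E E' → ProvDT F F' → ProvDT (.par S E F) (.par S E' F')
  | congLM (S) {E E' F F'} : ProvDT E E' → ProvDT F F' → ProvDT (.lmerge S E F) (.lmerge S E' F')
  | congSM (S) {E E' F F'} : ProvDT E E' → ProvDT F F' → ProvDT (.smerge S E F) (.smerge S E' F')
  | a1 (E F) : ProvDT (.sum E F) (.sum F E)
  | a2 (E F G) : ProvDT (.sum (.sum E F) G) (.sum E (.sum F G))
  | a3 (E) : ProvDT (.sum E E) E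
  | a4 (E) : ProvDT (.sum E .nil) E
  | tau1' {α} (h : α ≠ Act.delta) (E) : ProvDT (.pre α (.pre Act.tau E)) (.pre α E)
  | tau2 (E) : ProvDT (.sum E (.pre Act.tau E)) (.pre Act.tau E)
  | tau3' {α} (h : α ≠ Act.delta) (E F) :
      ProvDT (.sum (.pre α (.sum E (.pre Act.tau F))) (.pre α F))
             (.pre α (.sum E (.pre Act.tau F)))
  | tau4 {α} (h : α ≠ Act.delta) {x F} (hs : SerialVar F x) (E) :
      ProvDT (.pre α (subst F x (.pre Act.delta (.pre Act.tau E))))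
             (.pre α (subst F x (.pre Act.delta E)))
  | pri1 : ProvDT (.pri .nil) .nil
  | pri2 {α} (h : α ≠ Act.delta) (E) : ProvDT (.pri (.pre α E)) (.pre α E)
  | pri3 (E) : ProvDT (.pri (.pre Act.delta E)) .nil
  | pri4 (E F) : ProvDT (.pri (.sum E F)) (.sum (.pri E) (.pri F))
  | pri5 (E) : ProvDT (.pri (.pri E)) (.pri E)
  | pri6 (E F) : ProvDT (.sum (.pre Act.tau E) F) (.sum (.pre Act.tau E) (.pri F))
  | rec1 (x E) : ProvDT (.recur x E) (subst E x (.recur x E))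
  | rec2 {x E F} (hs : SerialVar E x) (hg : GVar E x) :
      ProvDT F (subst E x F) → ProvDT F (.recur x E)
  | ung1 (x E) : ProvDT (.recur x (.sum (.var x) E)) (.recur x E)
  | ung2 (x E) :
      ProvDT (.recur x (.sum (.pre Act.tau (.var x)) E)) (.recur x (.pre Act.tau (.pri E)))
  | ung3 (x E F) :
      ProvDT (.recur x (.sum (.pre Act.tau (.sum (.var x) E)) F))
             (.recur x (.sum (.sum (.pre Act.tau (.var x)) E) F))
  | ung4 (x E F) :
      ProvDT (.recur x (.sum (.pre Act.tau (.sum (.pri (.var x)) E)) F))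
             (.recur x (.sum (.sum (.pre Act.tau (.var x)) E) F))
  | ter (x : ℕ) : ProvDT .one (.recur x (.pre Act.delta (.var x)))
  | tpre1 {α} (h : α ≠ Act.delta) {x E} (hx : ¬ free E x) :
      ProvDT (.tpre α E) (.recur x (.sum (.pre Act.delta (.var x)) (.pre α E)))
  | tpre2 (E) : ProvDT (.tpre Act.delta E) (.pre Act.delta E)
  | tch1 (E F) : ProvDT (.tcho E F) (.tcho F E)
  | tch2 (E F G) : ProvDT (.tcho (.tcho E F) G) (.tcho E (.tcho F G))
  | tch3 (E) : ProvDT (.tcho E .one) E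
  | tch4 (E F) : ProvDT (.pri (.tcho E F)) (.sum (.pri E) (.pri F))
  | tch5 (E F) : ProvDT (.tcho (.pri E) F) (.sum (.pri E) (.pri F))
  | tch6 (E F) : ProvDT (.tcho (.pre Act.delta E) (.pre Act.delta F)) (.pre Act.delta (.tcho E F))
  | tch7 (E F G) : ProvDT (.tcho (.sum E F) G) (.sum (.tcho E G) (.tcho F G))
  | hi1 (L) : ProvDT (.hide L .nil) .nil
  | hi2 {γ} {L : Set ℕ} (h : ¬ Act.inSet γ L) (E) :
      ProvDT (.hide L (.pre γ E)) (.pre γ (.hide L E))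
  | hi3 {a : ℕ} {L : Set ℕ} (h : a ∈ L) (E) :
      ProvDT (.hide L (.pre (Act.vis a) E)) (.pre Act.tau (.hide L E))
  | hi4 (L E F) : ProvDT (.hide L (.sum E F)) (.sum (.hide L E) (.hide L F))
  | recHi {x E} (hs : SerialVar E x) (L) :
      ProvDT (.hide L (.recur x E)) (.recur x (.hide L E))
  | vis1 : ProvDT (.vis .nil) .nil
  | vis2 (a E) : ProvDT (.vis (.pre (Act.vis a) E)) (.pre (Act.vis a) E)
  | vis3 (E F) : ProvDT (.vis (.sum E F)) (.sum (.vis E) (.vis F))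
  | parAx (S E F) :
      ProvDT (.par S E F) (.sum (.sum (.lmerge S E F) (.lmerge S F E)) (.smerge S E F))
  | lm1 (S E) : ProvDT (.lmerge S .nil E) .nil
  | lm2 {γ} {S : Set ℕ} (h : Act.inSet γ S ∨ γ = Act.delta) (E F) :
      ProvDT (.lmerge S (.pre γ E) F) .nil
  | lm3 {α} {S : Set ℕ} (h1 : α ≠ Act.delta) (h2 : ¬ Act.inSet α S) (E F) :
      ProvDT (.lmerge S (.pre α E) F) (.pre α (.par S E F))
  | lm4 (S E F G) :
      ProvDT (.lmerge S (.sum E F) G) (.sum (.lmerge S E G) (.lmerge S F G))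
  | sm1 (S E F) : ProvDT (.smerge S E F) (.smerge S F E)
  | sm2 (S E) : ProvDT (.smerge S .nil E) .nil
  | sm3 {γ γ'} {S : Set ℕ} (h : ¬ (Act.inSet γ S ∨ γ = Act.delta) ∨ γ ≠ γ')
      (h1 : γ ≠ Act.tau) (h2 : γ' ≠ Act.tau) (E F) :
      ProvDT (.smerge S (.pre γ E) (.pre γ' F)) .nil
  | sm4 (S E F) : ProvDT (.smerge S (.pre Act.tau E) F) (.pri (.smerge S E F))
  | sm5 {γ} {S : Set ℕ} (h : Act.inSet γ S ∨ γ = Act.delta) (E F) :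
      ProvDT (.smerge S (.pre γ E) (.pre γ F)) (.pre γ (.par S E F))
  | sm6 (S E F G) :
      ProvDT (.smerge S (.sum (.pri E) (.pri F)) G)
             (.sum (.smerge S (.pri E) G) (.smerge S (.pri F) G))
  | sm7 (S E F G) :
      ProvDT (.smerge S (.sum (.pre Act.delta E) (.vis F)) G)
             (.sum (.smerge S (.pre Act.delta E) G) (.smerge S (.vis F) G))

/-- Standard equation sets. -/
structure StdEqSet (n : ℕ) where
  pres : Fin n → List (Act × Fin n)
  frees : Fin n → List ℕ
  frees_ge : ∀ i, ∀ w ∈ frees i, n ≤ w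

def instBody {n : ℕ} (S : StdEqSet n) (Es : Fin n → Expr) (i : Fin n) : Expr :=
  (S.pres i).foldr (fun p acc => Expr.sum (Expr.pre p.1 (Es p.2)) acc)
    ((S.frees i).foldr (fun w acc => Expr.sum (Expr.var w) acc) Expr.nil)

def ProvSatDT {n : ℕ} (hn : 0 < n) (E : Expr) (S : StdEqSet n) : Prop :=
  ∃ Es : Fin n → Expr, Es ⟨0, hn⟩ = E ∧
    (∀ i x, free (Es i) x → n ≤ x) ∧
    (∀ i, ProvDT (Es i) (instBody S Es i))

def Prioritized {n : ℕ} (S : StdEqSet n) : Prop :=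
  ∀ i, (∃ j, (Act.tau, j) ∈ S.pres i) → ∀ j, (Act.delta, j) ∉ S.pres i

def EqGuarded {n : ℕ} (S : StdEqSet n) : Prop :=
  ∀ i : Fin n, ¬ Relation.TransGen (fun i j : Fin n => (Act.tau, j) ∈ S.pres i) i i

/-- Each equation has at most one δ summand. -/
def TimeDetSet {n : ℕ} (S : StdEqSet n) : Prop :=
  ∀ i, ((S.pres i).filter (fun p => decide (p.1 = Act.delta))).length ≤ 1

def ClosedSet {n : ℕ} (S : StdEqSet n) : Prop := ∀ i, S.frees i = []

/-!
A guarded process has finitely many reachable states: each is a subterm of `P` in which the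
free variables are instantiated by the closed recursive processes binding them. Take one
equation per state, with one summand `γ.X_j` per transition to the state `j`. Each state
provably equals the sum of its transitions, by unfolding `rec` with `Rec1` and, in a sum
with a `τ`-summand, removing the `δ`-summands pre-empted by maximal progress with the `Pri`
axioms. The equation set is time-deterministic because `P` is, prioritized by maximal
progress, and guarded because `τ`-steps strictly decrease `tauDepth`.
-/

theorem subst_of_not_free {E : Expr} {x : ℕ} (B : Expr) (h : ¬ free E x) : subst E x B = E := by
  induction E <;> grind [subst, free]

theorem free_of_free_subst {E B : Expr} {x y : ℕ} (h : free (subst E x B) y) :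
    (free E y ∧ y ≠ x) ∨ (free E x ∧ free B y) := by
  induction E <;> grind [subst, free]

theorem gVar_of_not_free {E : Expr} {x : ℕ} (h : ¬ free E x) : GVar E x := by
  induction E <;> grind [GVar, free]

theorem gVar_subst {A B : Expr} {x y : ℕ} (hA : GVar A y) (hB : GVar B y) :
    GVar (subst A x B) y := by
  induction A <;> grind [subst, GVar]

theorem Guarded.subst {A B : Expr} {x : ℕ} (hA : Guarded A) (hB : Guarded B) (hBc : Closed B) :
    Guarded (subst A x B) := by
  induction A <;> simp only [DTCalc.subst, Guarded] at hA ⊢ <;> (try split_ifs) <;>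
    simp_all [Guarded, gVar_subst, gVar_of_not_free (hBc _)]

theorem Basic.subst {A B : Expr} {x : ℕ} (hA : Basic A) (hB : Basic B) : Basic (subst A x B) := by
  induction A <;> simp only [DTCalc.subst, Basic] at hA ⊢ <;> (try split_ifs) <;> simp_all [Basic]

theorem Closed.unfold {x : ℕ} {A : Expr} (h : Closed (.recur x A)) :
    Closed (subst A x (.recur x A)) := by
  intro y hy
  rcases free_of_free_subst hy with ⟨hA, hyx⟩ | ⟨-, hR⟩
  · exact h y ⟨hyx, hA⟩
  · exact h y hR

def headSize : Expr → ℕ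
  | .sum E F => 1 + headSize E + headSize F
  | .recur _ E => 1 + headSize E
  | _ => 0

def tauDepth : Expr → ℕ
  | .pre γ E => if γ = Act.tau then 1 + tauDepth E else 0
  | .sum E F => tauDepth E + tauDepth F
  | .recur _ E => tauDepth E
  | _ => 0

theorem headSize_subst {E B : Expr} {x : ℕ} (h : GVar E x) :
    headSize (subst E x B) = headSize E := by
  induction E <;> grind [subst, headSize, GVar]

theorem tauDepth_subst {E B : Expr} {x : ℕ} (h : GVar E x) :
    tauDepth (subst E x B) = tauDepth E := by
  induction E <;> grind [subst, tauDepth, GVar]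

theorem msubst_eq_self {E : Expr} {σ : ℕ → Expr} (h : ∀ y, free E y → σ y = .var y) :
    msubst E σ = E := by
  induction E generalizing σ with
  | recur z E ih =>
      refine congrArg _ (ih fun y hy => ?_)
      by_cases hyz : y = z
      · simp [hyz]
      · simpa [hyz] using h y ⟨hyz, hy⟩
  | _ => simp_all [msubst, free]

theorem exists_free_of_free_msubst {E : Expr} {σ : ℕ → Expr} {z : ℕ}
    (h : free (msubst E σ) z) : ∃ y, free E y ∧ free (σ y) z := by
  induction E generalizing σ with
  | recur x E ih =>
      obtain ⟨hzx, h⟩ := h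
      obtain ⟨y, hy, hσy⟩ := ih h
      by_cases hyx : y = x
      · subst hyx
        simp only [Function.update_self, free] at hσy
        exact absurd hσy.symm hzx
      · rw [Function.update_of_ne hyx] at hσy
        exact ⟨y, ⟨hyx, hy⟩, hσy⟩
  | _ => simp_all [msubst, free] <;> grind

theorem closed_msubst {E : Expr} {σ : ℕ → Expr} (h : ∀ y, free E y → Closed (σ y)) :
    Closed (msubst E σ) := fun z hz =>
  let ⟨y, hy, hσy⟩ := exists_free_of_free_msubst hz
  h y hy z hσy

theorem subst_msubst (A : Expr) (x : ℕ) (C : Expr) (σ : ℕ → Expr)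
    (hσ : ∀ y, σ y = .var y ∨ ¬ free (σ y) x) :
    subst (msubst A (Function.update σ x (.var x))) x C = msubst A (Function.update σ x C) := by
  induction A generalizing σ with
  | var m =>
      by_cases hmx : m = x
      · subst hmx
        simp [msubst, subst]
      · simp only [msubst, Function.update_of_ne hmx]
        rcases hσ m with h | h
        · simp [h, subst, hmx]
        · exact subst_of_not_free C h
  | recur z E ih =>
      by_cases hzx : z = x
      · subst hzx
        simp [msubst, subst]
      · simp only [msubst, subst, if_neg hzx]
        rw [Function.update_comm (Ne.symm hzx), Function.update_comm (Ne.symm hzx)]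
        refine congrArg _ (ih _ fun y => ?_)
        by_cases hyz : y = z
        · simp [hyz]
        · rw [Function.update_of_ne hyz]
          exact hσ y
  | _ => simp_all [msubst, subst]

structure GuardedProcess (E : Expr) : Prop where
  basic : Basic E
  closed : Closed E
  guarded : Guarded E

namespace GuardedProcess

variable {E A B : Expr}

theorem of_pre {γ : Act} (h : GuardedProcess (.pre γ E)) : GuardedProcess E :=
  ⟨h.basic, h.closed, h.guarded⟩

theorem sum_left (h : GuardedProcess (.sum A B)) : GuardedProcess A :=
  ⟨h.basic.1, fun y hy => h.closed y (Or.inl hy), h.guarded.1⟩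

theorem sum_right (h : GuardedProcess (.sum A B)) : GuardedProcess B :=
  ⟨h.basic.2, fun y hy => h.closed y (Or.inr hy), h.guarded.2⟩

theorem unfold {x : ℕ} (h : GuardedProcess (.recur x A)) :
    GuardedProcess (subst A x (.recur x A)) :=
  ⟨Basic.subst (A := A) h.basic h.basic, h.closed.unfold, h.guarded.2.subst h.guarded h.closed⟩

/-- Induction along unfoldings, which terminates because unfolding a guarded `rec`
shrinks `headSize`. -/
@[elab_as_elim]
theorem induction {motive : ∀ E, GuardedProcess E → Prop}
    (nil : ∀ h, motive .nil h)
    (pre : ∀ γ E h, motive (.pre γ E) h)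
    (sum : ∀ A B h, motive A (sum_left h) → motive B (sum_right h) → motive (.sum A B) h)
    (recur : ∀ x A h, motive (subst A x (.recur x A)) (unfold h) → motive (.recur x A) h)
    (hE : GuardedProcess E) : motive E hE := by
  induction hn : headSize E using Nat.strong_induction_on generalizing E with
  | _ n ih =>
  cases E with
  | nil => exact nil hE
  | var m => exact absurd rfl (hE.closed m)
  | pre γ E => exact pre γ E hE
  | sum A B =>
      simp only [headSize] at hn
      exact sum A B hE (ih _ (by omega) _ rfl) (ih _ (by omega) _ rfl)
  | recur x A =>
      have hlt : headSize (subst A x (.recur x A)) < n := by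
        rw [headSize_subst hE.guarded.1, ← hn, headSize]
        omega
      exact recur x A hE (ih _ hlt _ rfl)
  | _ => exact hE.basic.elim

end GuardedProcess

section Steps

variable {E A B Q : Expr} {γ : Act}

theorem StepDel.not_canTau (h : StepDel E Q) : ¬ CanTau E := by
  induction h <;> rintro ⟨R, hR⟩ <;> cases hR <;> grind [CanTau]

theorem canTau_iff : CanTau E ↔ ∃ Q, Step E .tau Q := by
  simp [CanTau, Step]

theorem not_step_delta_of_step_tau {Q' : Expr} (hτ : Step E .tau Q) : ¬ Step E .delta Q' := by
  simp only [Step, if_pos] at hτ ⊢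
  exact fun hδ => hδ.not_canTau ⟨Q, hτ⟩

theorem not_step_nil : ¬ Step .nil γ Q := by
  unfold Step; split_ifs <;> rintro ⟨⟩

theorem step_pre_iff {α : Act} : Step (.pre γ E) α Q ↔ α = γ ∧ Q = E := by
  unfold Step
  split_ifs with hα
  · subst hα
    constructor
    · rintro ⟨⟩; exact ⟨rfl, rfl⟩
    · rintro ⟨rfl, rfl⟩; exact .pre _
  · constructor
    · rintro ⟨⟩; exact ⟨rfl, rfl⟩
    · rintro ⟨rfl, rfl⟩; exact .pre hα _

theorem step_sum_iff : Step (.sum A B) γ Q ↔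
    (Step A γ Q ∨ Step B γ Q) ∧ (γ = .delta → ¬ CanTau A ∧ ¬ CanTau B) := by
  unfold Step
  split_ifs with hγ
  · constructor
    · intro h
      cases h with
      | sumL _ hA hB => exact ⟨.inl hA, fun _ => ⟨hA.not_canTau, hB⟩⟩
      | sumR _ hB hA => exact ⟨.inr hB, fun _ => ⟨hA, hB.not_canTau⟩⟩
    · rintro ⟨hA | hB, h⟩
      · exact .sumL _ hA (h hγ).2
      · exact .sumR _ hB (h hγ).1
  · simp only [hγ, false_implies, and_true]
    constructor
    · intro h
      cases h with
      | sumL _ h => exact .inl h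
      | sumR _ h => exact .inr h
    · rintro (h | h)
      exacts [.sumL _ h, .sumR _ h]

theorem step_recur_iff {x : ℕ} :
    Step (.recur x A) γ Q ↔ Step (subst A x (.recur x A)) γ Q := by
  unfold Step
  split_ifs
  · exact ⟨fun h => by cases h; assumption, .unf⟩
  · exact ⟨fun h => by cases h; assumption, .unf⟩

end Steps

def HasTau (l : List (Act × Expr)) : Prop := ∃ Q, (Act.tau, Q) ∈ l

noncomputable def prioritize (l : List (Act × Expr)) : List (Act × Expr) :=
  open Classical in if HasTau l then l.filter (·.1 ≠ Act.delta) else l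

theorem mem_prioritize {l : List (Act × Expr)} {γ : Act} {Q : Expr} :
    (γ, Q) ∈ prioritize l ↔ (γ, Q) ∈ l ∧ (γ = Act.delta → ¬ HasTau l) := by
  unfold prioritize
  split_ifs with h <;> simp [h]

/-- The guard in the `rec` case only serves termination; it holds for guarded recursion
(`transitions_recur`). -/
noncomputable def transitions : Expr → List (Act × Expr)
  | .pre γ E => [(γ, E)]
  | .sum E F => prioritize (transitions E ++ transitions F)
  | .recur x E =>
      if _ : headSize (subst E x (.recur x E)) < headSize (.recur x E) then
        transitions (subst E x (.recur x E))
      else []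
  | _ => []
termination_by E => headSize E
decreasing_by all_goals simp only [headSize] at *; omega

theorem transitions_recur {x : ℕ} {A : Expr} (h : GVar A x) :
    transitions (.recur x A) = transitions (subst A x (.recur x A)) := by
  rw [transitions, dif_pos (by rw [headSize_subst h, headSize]; omega)]

theorem GuardedProcess.step_iff {E : Expr} (hE : GuardedProcess E) {γ : Act} {Q : Expr} :
    Step E γ Q ↔ (γ, Q) ∈ transitions E := by
  induction hE using GuardedProcess.induction generalizing γ Q with
  | nil => simp [not_step_nil, transitions]
  | pre => simp [step_pre_iff, transitions]
  | sum A B _ ihA ihB =>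
      have hτ : ∀ E, (∀ {γ Q}, Step E γ Q ↔ (γ, Q) ∈ transitions E) →
          (CanTau E ↔ HasTau (transitions E)) := fun E h => by simp [canTau_iff, h, HasTau]
      rw [step_sum_iff, transitions, mem_prioritize, List.mem_append, ihA, ihB,
        hτ A ihA, hτ B ihB]
      simp [HasTau, forall_and]
  | recur x A hR ih => rw [step_recur_iff, ih, transitions_recur hR.guarded.1]

namespace GuardedProcess

variable {E Q : Expr} {γ : Act}

theorem step_induction {R : Expr → Act → Expr → Prop}
    (pre : ∀ γ E, GuardedProcess (.pre γ E) → R (.pre γ E) γ E)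
    (sumL : ∀ A B γ Q, R A γ Q → R (.sum A B) γ Q)
    (sumR : ∀ A B γ Q, R B γ Q → R (.sum A B) γ Q)
    (recur : ∀ x A γ Q, GuardedProcess (.recur x A) → R (subst A x (.recur x A)) γ Q →
      R (.recur x A) γ Q)
    (hE : GuardedProcess E) (h : Step E γ Q) : R E γ Q := by
  rw [hE.step_iff] at h
  induction hE using GuardedProcess.induction generalizing γ Q with
  | nil => simp [transitions] at h
  | pre γ E hE =>
      obtain ⟨rfl, rfl⟩ : _ ∧ _ := by simpa [transitions] using h
      exact pre _ _ hE
  | sum A B _ ihA ihB =>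
      rw [transitions, mem_prioritize, List.mem_append] at h
      exact h.1.elim (fun hA => sumL A B γ Q (ihA hA)) (fun hB => sumR A B γ Q (ihB hB))
  | recur x A hR ih =>
      rw [transitions_recur hR.guarded.1] at h
      exact recur x A γ Q hR (ih h)

theorem of_step (hE : GuardedProcess E) (h : Step E γ Q) : GuardedProcess Q :=
  step_induction (R := fun _ _ Q => GuardedProcess Q) (fun _ _ h => h.of_pre)
    (fun _ _ _ _ => id) (fun _ _ _ _ => id) (fun _ _ _ _ _ => id) hE h

theorem of_reach {P : Expr} (hP : GuardedProcess P) (h : Reach P Q) : GuardedProcess Q := by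
  induction h with
  | refl => exact hP
  | tail _ hstep ih => exact ih.of_step hstep.choose_spec

theorem tauDepth_lt (hE : GuardedProcess E) (h : Step E .tau Q) : tauDepth Q < tauDepth E :=
  step_induction (R := fun E γ Q => γ = .tau → tauDepth Q < tauDepth E)
    (fun γ E _ hγ => by simp [tauDepth, hγ])
    (fun _ _ _ _ ih hγ => by have := ih hγ; simp only [tauDepth]; omega)
    (fun _ _ _ _ ih hγ => by have := ih hγ; simp only [tauDepth]; omega)
    (fun x A _ _ hR ih hγ => by simpa [tauDepth, tauDepth_subst hR.guarded.1] using ih hγ)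
    hE h rfl

end GuardedProcess

inductive SynStep : Expr → Expr → Prop where
  | pre (γ : Act) (E : Expr) : SynStep (.pre γ E) E
  | sumL {E X : Expr} (F : Expr) : SynStep E X → SynStep (.sum E F) X
  | sumR {F X : Expr} (E : Expr) : SynStep F X → SynStep (.sum E F) X
  | unf (x : ℕ) (E : Expr) : SynStep (.recur x E) (subst E x (.recur x E))

theorem GuardedProcess.transGen_synStep {E Q : Expr} {γ : Act} (hE : GuardedProcess E)
    (h : Step E γ Q) : Relation.TransGen SynStep E Q := by
  refine hE.step_induction (R := fun E _ Q => Relation.TransGen SynStep E Q)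
    (fun γ E _ => .single (.pre γ E)) (fun A B _ _ hA => ?_) (fun A B _ _ hB => ?_)
    (fun x A _ _ _ ih => .head (.unf x A) ih) h
  · obtain ⟨R, hAR, hR⟩ := Relation.TransGen.head'_iff.mp hA
    exact Relation.TransGen.head'_iff.mpr ⟨R, .sumL B hAR, hR⟩
  · obtain ⟨R, hBR, hR⟩ := Relation.TransGen.head'_iff.mp hB
    exact Relation.TransGen.head'_iff.mpr ⟨R, .sumR A hBR, hR⟩

/-- For closed `σ`, a `SynStep` leaves this list only by a step of some `σ y`
(`synStep_mem_synDerivs`): below `rec x E` the environment sends `x` to the closed process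
`msubst (rec x E) σ` itself, so the unfoldings of that process stay in the list. -/
def synDerivs : Expr → (ℕ → Expr) → List Expr
  | .pre γ E, σ => msubst (.pre γ E) σ :: synDerivs E σ
  | .sum E F, σ => msubst (.sum E F) σ :: (synDerivs E σ ++ synDerivs F σ)
  | .recur x E, σ =>
      msubst (.recur x E) σ :: synDerivs E (Function.update σ x (msubst (.recur x E) σ))
  | E, σ => [msubst E σ]

theorem msubst_mem_synDerivs (E : Expr) (σ : ℕ → Expr) : msubst E σ ∈ synDerivs E σ := by
  cases E <;> simp [synDerivs]

theorem synStep_mem_synDerivs (E : Expr) {σ : ℕ → Expr} (hσ : ∀ y, Closed (σ y))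
    {Q Q' : Expr} (hQ : Q ∈ synDerivs E σ) (h : SynStep Q Q') :
    Q' ∈ synDerivs E σ ∨ ∃ y, SynStep (σ y) Q' := by
  induction E generalizing σ Q with
  | pre γ E ih =>
      rcases List.mem_cons.mp hQ with rfl | hQ
      · cases h
        exact .inl (List.mem_cons_of_mem _ (msubst_mem_synDerivs E σ))
      · exact (ih hσ hQ h).imp_left (List.mem_cons_of_mem _)
  | sum E F ihE ihF =>
      simp only [synDerivs, List.mem_cons, List.mem_append] at hQ ⊢
      rcases hQ with rfl | hQ | hQ
      · cases h with
        | sumL _ h => exact (ihE hσ (msubst_mem_synDerivs E σ) h).imp_left (.inr ∘ .inl)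
        | sumR _ h => exact (ihF hσ (msubst_mem_synDerivs F σ) h).imp_left (.inr ∘ .inr)
      · exact (ihE hσ hQ h).imp_left (.inr ∘ .inl)
      · exact (ihF hσ hQ h).imp_left (.inr ∘ .inr)
  | recur x E ih =>
      have hμ : Closed (msubst (.recur x E) σ) := closed_msubst fun y _ => hσ y
      have hσ' : ∀ y, Closed (Function.update σ x (msubst (.recur x E) σ) y) := by
        intro y
        by_cases hyx : y = x
        · simpa [hyx] using hμ
        · simpa [hyx] using hσ y
      have hunf : ∀ {Q'}, SynStep (msubst (.recur x E) σ) Q' →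
          Q' ∈ synDerivs E (Function.update σ x (msubst (.recur x E) σ)) := by
        intro Q' h
        cases h
        rw [subst_msubst E x _ σ fun y => .inr (hσ y x)]
        exact msubst_mem_synDerivs E _
      simp only [synDerivs, List.mem_cons] at hQ ⊢
      rcases hQ with rfl | hQ
      · exact .inl (.inr (hunf h))
      · rcases ih hσ' hQ h with h' | ⟨y, hy⟩
        · exact .inl (.inr h')
        · by_cases hyx : y = x
          · subst hyx
            exact .inl (.inr (hunf (by simpa using hy)))
          · exact .inr ⟨y, by simpa [hyx] using hy⟩
  | var m =>
      simp only [synDerivs, msubst, List.mem_singleton] at hQ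
      exact .inr ⟨m, hQ ▸ h⟩
  | _ =>
      simp only [synDerivs, msubst, List.mem_singleton] at hQ
      subst hQ
      cases h

theorem GuardedProcess.reach_mem_synDerivs {P Q : Expr} (hP : GuardedProcess P)
    (h : Reach P Q) : Q ∈ synDerivs P (fun _ => .nil) := by
  induction h with
  | refl => simpa [msubst_eq_self fun y hy => absurd hy (hP.closed y)] using
      msubst_mem_synDerivs P (fun _ => .nil)
  | tail hPQ hstep ih =>
      have hσ : ∀ y : ℕ, Closed ((fun _ => Expr.nil) y) := fun _ _ h => h
      have hclosed : ∀ {R R'}, R ∈ synDerivs P (fun _ => .nil) → SynStep R R' →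
          R' ∈ synDerivs P (fun _ => .nil) := fun hR h =>
        (synStep_mem_synDerivs P hσ hR h).resolve_right (by rintro ⟨_, ⟨⟩⟩)
      have hpath := (hP.of_reach hPQ).transGen_synStep hstep.choose_spec
      clear hstep
      induction hpath with
      | single h => exact hclosed ih h
      | tail _ h ih' => exact hclosed ih' h

theorem GuardedProcess.finite_reach {P : Expr} (hP : GuardedProcess P) :
    {Q | Reach P Q}.Finite :=
  (synDerivs P _).finite_toSet.subset fun _ => hP.reach_mem_synDerivs

def sumOf (l : List Expr) : Expr := l.foldr .sum .nil

def prefixSum (l : List (Act × Expr)) : Expr := sumOf (l.map fun p => .pre p.1 p.2)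

namespace ProvDT

theorem sum_left_comm (a b c : Expr) : ProvDT (.sum a (.sum b c)) (.sum b (.sum a c)) :=
  .trans (.symm (.a2 a b c)) (.trans (.congSum (.a1 a b) (.refl c)) (.a2 b a c))

theorem sum_sumOf_of_mem {x : Expr} {l : List Expr} (h : x ∈ l) :
    ProvDT (.sum x (sumOf l)) (sumOf l) := by
  induction l with
  | nil => cases h
  | cons y t ih =>
      rcases List.mem_cons.mp h with rfl | h
      · exact .trans (.symm (.a2 x x (sumOf t))) (.congSum (.a3 x) (.refl _))
      · exact .trans (sum_left_comm x y (sumOf t)) (.congSum (.refl y) (ih h))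

theorem sum_sumOf_of_subset {l₁ l₂ : List Expr} (h : l₁ ⊆ l₂) :
    ProvDT (.sum (sumOf l₁) (sumOf l₂)) (sumOf l₂) := by
  induction l₁ with
  | nil => exact .trans (.a1 _ _) (.a4 _)
  | cons x t ih =>
      exact .trans (.a2 x (sumOf t) (sumOf l₂)) (.trans
        (.congSum (.refl x) (ih (List.subset_of_cons_subset h)))
        (sum_sumOf_of_mem (h List.mem_cons_self)))

theorem sumOf_of_subset_of_subset {l₁ l₂ : List Expr} (h₁ : l₁ ⊆ l₂) (h₂ : l₂ ⊆ l₁) :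
    ProvDT (sumOf l₁) (sumOf l₂) :=
  .trans (.symm (sum_sumOf_of_subset h₂)) (.trans (.a1 _ _) (sum_sumOf_of_subset h₁))

theorem sum_prefixSum (l₁ l₂ : List (Act × Expr)) :
    ProvDT (.sum (prefixSum l₁) (prefixSum l₂)) (prefixSum (l₁ ++ l₂)) := by
  induction l₁ with
  | nil => exact .trans (.a1 _ _) (.a4 _)
  | cons x t ih => exact .trans (.a2 _ _ _) (.congSum (.refl _) ih)

theorem pri_prefixSum (l : List (Act × Expr)) :
    ProvDT (.pri (prefixSum l)) (prefixSum (l.filter (·.1 ≠ Act.delta))) := by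
  induction l with
  | nil => exact .pri1
  | cons p t ih =>
      obtain ⟨γ, Q⟩ := p
      refine .trans (.pri4 _ _) ?_
      by_cases hγ : γ = Act.delta
      · subst hγ
        rw [List.filter_cons_of_neg (by simp)]
        exact .trans (.congSum (.pri3 Q) ih) (.trans (.a1 _ _) (.a4 _))
      · rw [List.filter_cons_of_pos (by simpa using hγ)]
        exact .congSum (.pri2 hγ Q) ih

/-- Axiom `Pri6` lets a `τ`-summand cut off the `δ`-summands of its context. -/
theorem prefixSum_prioritize (l : List (Act × Expr)) :
    ProvDT (prefixSum l) (prefixSum (prioritize l)) := by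
  unfold prioritize
  split_ifs with h
  · obtain ⟨X, hX⟩ := h
    have hmem : ∀ {m : List (Act × Expr)}, (Act.tau, X) ∈ m →
        Expr.pre Act.tau X ∈ m.map fun p => Expr.pre p.1 p.2 :=
      fun hm => List.mem_map.mpr ⟨_, hm, rfl⟩
    refine .trans (.symm (sum_sumOf_of_mem (hmem hX))) (.trans (.pri6 X _) ?_)
    exact .trans (.congSum (.refl _) (pri_prefixSum l))
      (sum_sumOf_of_mem (hmem (List.mem_filter.mpr ⟨hX, by simp⟩)))
  · exact .refl _

end ProvDT

theorem GuardedProcess.provDT_prefixSum {E : Expr} (hE : GuardedProcess E) :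
    ProvDT E (prefixSum (transitions E)) := by
  induction hE using GuardedProcess.induction with
  | nil => simpa [transitions, prefixSum, sumOf] using .refl .nil
  | pre γ E => simpa [transitions, prefixSum, sumOf] using .symm (.a4 (.pre γ E))
  | sum A B _ ihA ihB =>
      rw [transitions]
      exact .trans (.congSum ihA ihB)
        (.trans (.sum_prefixSum _ _) (.prefixSum_prioritize _))
  | recur x A hR ih =>
      rw [transitions_recur hR.guarded.1]
      exact .trans (.rec1 x A) ih

section EquationSet

variable {n : ℕ} {Es : Fin n → Expr} {idx : Expr → Fin n}

variable (Es idx) in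
/-- Equation `i` has a summand `γ.X_j` for every move `Es i -γ→ Q`, where `j = idx Q`. -/
noncomputable def eqSetOf : StdEqSet n where
  pres i := ((transitions (Es i)).map fun p => (p.1, idx p.2)).dedup
  frees _ := []
  frees_ge _ _ h := nomatch h

theorem mem_eqSetOf_pres (hEs : ∀ i, GuardedProcess (Es i)) {i j : Fin n} {γ : Act} :
    (γ, j) ∈ (eqSetOf Es idx).pres i ↔ ∃ Q, Step (Es i) γ Q ∧ idx Q = j := by
  simp [eqSetOf, (hEs i).step_iff]

theorem timeDetSet_eqSetOf (hEs : ∀ i, GuardedProcess (Es i))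
    (hT : ∀ i Q₁ Q₂, Step (Es i) .delta Q₁ → Step (Es i) .delta Q₂ → Q₁ = Q₂) :
    TimeDetSet (eqSetOf Es idx) := by
  intro i
  have hnd : ((eqSetOf Es idx).pres i).Nodup := List.nodup_dedup _
  rw [← List.toFinset_card_of_nodup (hnd.filter _)]
  refine Finset.card_le_one.2 fun ⟨γ, j⟩ hj ⟨γ', j'⟩ hj' => ?_
  simp only [List.mem_toFinset, List.mem_filter, decide_eq_true_eq] at hj hj'
  obtain ⟨hj, rfl⟩ := hj
  obtain ⟨hj', rfl⟩ := hj'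
  obtain ⟨Q, hQ, rfl⟩ := (mem_eqSetOf_pres hEs).1 hj
  obtain ⟨Q', hQ', rfl⟩ := (mem_eqSetOf_pres hEs).1 hj'
  rw [hT i Q Q' hQ hQ']

theorem prioritized_eqSetOf (hEs : ∀ i, GuardedProcess (Es i)) :
    Prioritized (eqSetOf Es idx) := by
  rintro i ⟨j, hj⟩ k hk
  obtain ⟨Q, hQ, -⟩ := (mem_eqSetOf_pres hEs).1 hj
  obtain ⟨Q', hQ', -⟩ := (mem_eqSetOf_pres hEs).1 hk
  exact not_step_delta_of_step_tau hQ hQ'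

theorem eqGuarded_eqSetOf (hEs : ∀ i, GuardedProcess (Es i))
    (hidx : ∀ i γ Q, Step (Es i) γ Q → Es (idx Q) = Q) : EqGuarded (eqSetOf Es idx) := by
  have hlt : ∀ i j, (Act.tau, j) ∈ (eqSetOf Es idx).pres i →
      tauDepth (Es i) > tauDepth (Es j) := by
    intro i j h
    obtain ⟨Q, hQ, rfl⟩ := (mem_eqSetOf_pres hEs).1 h
    rw [hidx i _ Q hQ]
    exact (hEs i).tauDepth_lt hQ
  intro i hcyc
  simpa [Relation.transGen_eq_self, Function.onFun] using
    hcyc.lift (p := (· > ·)) (fun i => tauDepth (Es i)) hlt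

theorem provSatDT_eqSetOf (hn : 0 < n) (hEs : ∀ i, GuardedProcess (Es i))
    (hidx : ∀ i γ Q, Step (Es i) γ Q → Es (idx Q) = Q) :
    ProvSatDT hn (Es ⟨0, hn⟩) (eqSetOf Es idx) := by
  refine ⟨Es, rfl, fun i x hx => absurd hx ((hEs i).closed x), fun i => ?_⟩
  have hbody : instBody (eqSetOf Es idx) Es i =
      sumOf (((eqSetOf Es idx).pres i).map fun p => .pre p.1 (Es p.2)) := by
    simp only [instBody, sumOf, List.foldr_map]
    rfl
  have hsummands : ∀ F, F ∈ (transitions (Es i)).map (fun p => Expr.pre p.1 p.2) ↔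
      F ∈ ((eqSetOf Es idx).pres i).map (fun p => Expr.pre p.1 (Es p.2)) := by
    intro F
    simp only [List.mem_map, Prod.exists]
    constructor
    · rintro ⟨γ, Q, hQ, rfl⟩
      have hstep := (hEs i).step_iff.2 hQ
      exact ⟨γ, idx Q, (mem_eqSetOf_pres hEs).2 ⟨Q, hstep, rfl⟩, by rw [hidx i γ Q hstep]⟩
    · rintro ⟨γ, j, hj, rfl⟩
      obtain ⟨Q, hQ, rfl⟩ := (mem_eqSetOf_pres hEs).1 hj
      exact ⟨γ, Q, (hEs i).step_iff.1 hQ, by rw [hidx i γ Q hQ]⟩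
  rw [hbody]
  exact .trans (hEs i).provDT_prefixSum
    (.sumOf_of_subset_of_subset (fun F => (hsummands F).1) (fun F => (hsummands F).2))

end EquationSet

theorem exists_index {α : Type*} (L : List α) (hL : 0 < L.length) :
    ∃ idx : α → Fin L.length, ∀ a ∈ L, L[idx a] = a := by
  have : ∀ a, ∃ i : Fin L.length, a ∈ L → L[i] = a := fun a => by
    by_cases ha : a ∈ L
    · obtain ⟨i, hi, rfl⟩ := List.getElem_of_mem ha
      exact ⟨⟨i, hi⟩, fun _ => rfl⟩
    · exact ⟨⟨0, hL⟩, fun h => absurd h ha⟩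
  choose idx hidx using this
  exact ⟨idx, hidx⟩

/-- time-deterministic representability of guarded basic
processes via time-deterministic, prioritized, standard, guarded, closed
equation sets. -/
theorem td_representability (P : Expr)
    (hB : Basic P) (hcl : Closed P) (hG : Guarded P) (hT : TimeDet P) :
    ∃ (n : ℕ) (hn : 0 < n) (S : StdEqSet n),
      TimeDetSet S ∧ Prioritized S ∧ EqGuarded S ∧ ClosedSet S ∧
      ProvSatDT hn P S := by
  have hP : GuardedProcess P := ⟨hB, hcl, hG⟩
  let L := P :: hP.finite_reach.toFinset.toList
  have hL : ∀ Q, Q ∈ L ↔ Reach P Q := fun Q => by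
    simpa [L] using fun h : Q = P => h ▸ Relation.ReflTransGen.refl
  have hn : 0 < L.length := List.length_pos_of_mem List.mem_cons_self
  obtain ⟨idx, hidx⟩ := exists_index L hn
  have hreach : ∀ i : Fin L.length, Reach P L[i] := fun i => (hL _).1 (List.getElem_mem i.2)
  have hEs : ∀ i : Fin L.length, GuardedProcess L[i] := fun i => hP.of_reach (hreach i)
  have hsucc : ∀ (i : Fin L.length) γ Q, Step L[i] γ Q → L[idx Q] = Q := fun i γ Q h =>
    hidx Q ((hL Q).2 ((hreach i).tail ⟨γ, h⟩))
  exact ⟨L.length, hn, eqSetOf (fun i => L[i]) idx,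
    timeDetSet_eqSetOf hEs fun i => hT _ (hreach i), prioritized_eqSetOf hEs,
    eqGuarded_eqSetOf hEs hsucc, fun _ => rfl, provSatDT_eqSetOf hn hEs hsucc⟩

end DTCalc
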